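/- The Dic∞-representation V⊗V decomposes as a direct sum of three pairwise non-isomorphic simple subrepresentations: the two-dimensional simple V₂ spanned by v₁⊗v₁ and v₂⊗v₂, the trivial one-dimensional representation spanned by v₂⊗v₁ − v₁⊗v₂, and the one-dimensional representation 𝟙̄ spanned by v₁⊗v₂ + v₂⊗v₁ (on which a acts by 1 and x acts by −1); consequently dim_ℂ End_{Dic∞}(V⊗V) = 3. -/

import Mathlib

open scoped TensorProduct
open Matrix

noncomputable section

/-- `ℂ²`, the standard two-dimensional complex vector space. -/
abbrev V2 : Type := Fin 2 → ℂ

/-- The standard representation of a subgroup `G ≤ GL₂(ℂ)` on `ℂ²`, by matrix-vector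
multiplication. -/
def stdRep (G : Subgroup (GL (Fin 2) ℂ)) : Representation ℂ G V2 where
  toFun g := Matrix.toLin' ((g : GL (Fin 2) ℂ) : Matrix (Fin 2) (Fin 2) ℂ)
  map_one' := by
    simp only [OneMemClass.coe_one, Units.val_one, Matrix.toLin'_one]
    rfl
  map_mul' g h := by
    simp only [MulMemClass.coe_mul, Units.val_mul, Matrix.toLin'_mul]
    rfl

/-- The standard basis vectors `v₁ = bv 0`, `v₂ = bv 1` of `ℂ²`. -/
def bv (s : Fin 2) : V2 := Pi.single s 1

/-- The tensor square `V ⊗ V` of `V = ℂ²` (bundled in `ModuleCat ℂ`). -/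
def TSq : ModuleCat ℂ := ModuleCat.of ℂ (V2 ⊗[ℂ] V2)

/-- The diagonal representation of `G ≤ GL₂(ℂ)` on `V ⊗ V`. -/
def sqRep (G : Subgroup (GL (Fin 2) ℂ)) : Representation ℂ G TSq :=
  (stdRep G).tprod (stdRep G)

/-- The two-dimensional subspace of `V ⊗ V` spanned by `v₁⊗v₁` and `v₂⊗v₂`. -/
def Wtwo : Submodule ℂ TSq :=
  Submodule.span ℂ {bv 0 ⊗ₜ[ℂ] bv 0, bv 1 ⊗ₜ[ℂ] bv 1}

/-- The line in `V ⊗ V` spanned by `v₂⊗v₁ − v₁⊗v₂` (a copy of the trivial representation). -/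
def Wtriv : Submodule ℂ TSq :=
  Submodule.span ℂ {bv 1 ⊗ₜ[ℂ] bv 0 - bv 0 ⊗ₜ[ℂ] bv 1}

/-- The line `𝟙̄` in `V ⊗ V` spanned by `v₁⊗v₂ + v₂⊗v₁`. -/
def Wsign : Submodule ℂ TSq :=
  Submodule.span ℂ {bv 0 ⊗ₜ[ℂ] bv 1 + bv 1 ⊗ₜ[ℂ] bv 0}

/-- The space `End_G(W)` of `G`-equivariant linear endomorphisms of a representation `W`. -/
def equivEnd {G W : Type*} [Group G] [AddCommGroup W] [Module ℂ W]
    (ρ : Representation ℂ G W) : Submodule ℂ (W →ₗ[ℂ] W) where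
  carrier := {f | ∀ g : G, f ∘ₗ ρ g = ρ g ∘ₗ f}
  add_mem' := by
    intro f h hf hh g
    simp only [LinearMap.add_comp, LinearMap.comp_add, hf g, hh g]
  zero_mem' := by
    intro g
    simp only [LinearMap.zero_comp, LinearMap.comp_zero]
  smul_mem' := by
    intro c f hf g
    simp only [LinearMap.smul_comp, LinearMap.comp_smul, hf g]

/-! In the basis `v₁⊗v₁, v₂⊗v₂, v₂⊗v₁ − v₁⊗v₂, v₁⊗v₂ + v₂⊗v₁` of `V ⊗ V` the generator `a` acts
diagonally with eigenvalues `e^{2iθ}, e^{-2iθ}, 1, 1`, the first three pairwise distinct because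
`θ/π` is irrational, while `x` swaps the first two vectors and acts by `1` and `−1` on the last
two. Invariance and the action on the lines only have to be checked on these generators. An
invariant subspace of `V₂` containing a nonzero vector contains its `a`-eigencomponents, so one of
`v₁⊗v₁, v₂⊗v₂`, and then `x` gives the other. Finally, the matrices commuting with both
generators are exactly `diag(α, α, β, γ)`, so `End_{Dic∞}(V ⊗ V)` is three-dimensional. -/

open Complex TensorProduct

namespace Representation

variable {k H V : Type*} [Group H] {S : Set H} {g : H}

section CommSemiring

variable [CommSemiring k] [AddCommMonoid V] [Module k V] (ρ : Representation k H V)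

theorem apply_eq_self_of_mem_closure {v : V} (hS : ∀ s ∈ S, ρ s v = v)
    (hg : g ∈ Subgroup.closure S) : ρ g v = v := by
  induction hg using Subgroup.closure_induction with
  | mem s hs => exact hS s hs
  | one => simp
  | mul g h _ _ hg hh => rw [map_mul, Module.End.mul_apply, hh, hg]
  | inv g _ hg => rw [inv_apply_eq_iff, hg]

theorem comp_eq_comp_of_mem_closure {f : V →ₗ[k] V} (hS : ∀ s ∈ S, f ∘ₗ ρ s = ρ s ∘ₗ f)
    (hg : g ∈ Subgroup.closure S) : f ∘ₗ ρ g = ρ g ∘ₗ f := by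
  induction hg using Subgroup.closure_induction with
  | mem s hs => exact hS s hs
  | one => rw [map_one]; rfl
  | mul g h _ _ hg hh =>
    rw [map_mul, Module.End.mul_eq_comp, ← LinearMap.comp_assoc, hg, LinearMap.comp_assoc, hh,
      LinearMap.comp_assoc]
  | inv g _ hg =>
    ext v
    rw [LinearMap.comp_apply, LinearMap.comp_apply, eq_comm, inv_apply_eq_iff,
      ← LinearMap.comp_apply (ρ g) f, ← hg, LinearMap.comp_apply, self_inv_apply]

end CommSemiring

theorem apply_mem_of_mem_closure [Field k] [AddCommGroup V] [Module k V]
    (ρ : Representation k H V) {W : Submodule k V} [FiniteDimensional k W]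
    (hS : ∀ s ∈ S, ∀ z ∈ W, ρ s z ∈ W) (hg : g ∈ Subgroup.closure S) : ∀ z ∈ W, ρ g z ∈ W := by
  induction hg using Subgroup.closure_induction with
  | mem s hs => exact hS s hs
  | one => simp
  | mul g h _ _ hg hh =>
    intro z hz
    rw [map_mul, Module.End.mul_apply]
    exact hg _ (hh z hz)
  | inv g _ hg =>
    intro z hz
    have hsurj : Function.Surjective ((ρ g).restrict hg) :=
      LinearMap.injective_iff_surjective.mp fun x y hxy =>
        Subtype.ext ((ρ.apply_bijective g).injective (congrArg Subtype.val hxy))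
    obtain ⟨w, hw⟩ := hsurj ⟨z, hz⟩
    have hzw : z = ρ g w := (congrArg Subtype.val hw).symm
    rw [hzw, inv_self_apply]
    exact w.2

end Representation

theorem mem_equivEnd_comp_closure_iff {H W : Type*} [Group H] [AddCommGroup W] [Module ℂ W]
    (ρ : Representation ℂ H W) (S : Set H) (f : W →ₗ[ℂ] W) :
    f ∈ equivEnd (ρ.comp (Subgroup.closure S).subtype) ↔ ∀ s ∈ S, f ∘ₗ ρ s = ρ s ∘ₗ f :=
  ⟨fun hf s hs => hf ⟨s, Subgroup.subset_closure hs⟩,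
    fun hf g => ρ.comp_eq_comp_of_mem_closure hf g.2⟩

theorem Module.Basis.finrank_span_image {ι K V : Type*} [DivisionRing K] [AddCommGroup V]
    [Module K V] (b : Module.Basis ι K V) (s : Set ι) [Fintype s] :
    Module.finrank K (Submodule.span K (b '' s)) = Fintype.card s := by
  rw [Set.image_eq_range]
  exact finrank_span_eq_card (b.linearIndependent.comp _ Subtype.val_injective)

theorem Submodule.eq_bot_or_eq_of_le_of_finrank_eq_one {K V : Type*} [DivisionRing K]
    [AddCommGroup V] [Module K V] {q W : Submodule K V} (hW : Module.finrank K W = 1)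
    (hq : q ≤ W) : q = ⊥ ∨ q = W := by
  have := Module.finite_of_finrank_eq_succ hW
  have := Submodule.finiteDimensional_of_le hq
  have hle : Module.finrank K q ≤ 1 := hW ▸ Submodule.finrank_mono hq
  interval_cases h : Module.finrank K q
  · exact .inl (Submodule.finrank_eq_zero.mp h)
  · exact .inr (Submodule.eq_of_le_of_finrank_eq hq (h.trans hW.symm))

theorem Submodule.mem_of_add_mem_of_eigenvectors {K V : Type*} [Field K] [AddCommGroup V]
    [Module K V] {q : Submodule K V} {T : V →ₗ[K] V} (hq : ∀ z ∈ q, T z ∈ q) {x y : V} {a b : K}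
    (hx : T x = a • x) (hy : T y = b • y) (hab : a ≠ b) (hxy : x + y ∈ q) : x ∈ q := by
  have hx' : x = (a - b)⁻¹ • (T (x + y) - b • (x + y)) := by
    rw [map_add, hx, hy, smul_add, add_sub_add_right_eq_sub, ← sub_smul, smul_smul,
      inv_mul_cancel₀ (sub_ne_zero.mpr hab), one_smul]
  rw [hx']
  exact q.smul_mem _ (q.sub_mem (hq _ hxy) (q.smul_mem _ hxy))

theorem exp_int_mul_mul_I_injective {θ : ℝ} (hθ : Irrational (θ / Real.pi)) :
    Function.Injective fun n : ℤ => exp (n * θ * I) := by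
  intro m n hmn
  by_contra hne
  obtain ⟨k, hk⟩ := exp_eq_exp_iff_exists_int.mp hmn
  have hsub : (m - n : ℝ) ≠ 0 := sub_ne_zero.mpr (Int.cast_injective.ne hne)
  have hreal : (m - n : ℝ) * θ = 2 * k * Real.pi := by
    have him := congrArg Complex.im hk
    simp only [mul_im, mul_re, intCast_re, intCast_im, ofReal_re, ofReal_im, I_re, I_im,
      add_im, re_ofNat, im_ofNat] at him
    linarith
  exact hθ ⟨2 * k / (m - n), by push_cast; field_simp; linarith⟩

def blockScalar : (Fin 3 → ℂ) →ₗ[ℂ] Matrix (Fin 4) (Fin 4) ℂ :=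
  (diagonalLinearMap (Fin 4) ℂ ℂ).comp (LinearMap.funLeft ℂ ℂ ![0, 0, 1, 2])

theorem blockScalar_apply (c : Fin 3 → ℂ) : blockScalar c = diagonal ![c 0, c 0, c 1, c 2] := by
  simp only [blockScalar, LinearMap.comp_apply, diagonalLinearMap_apply]
  ext i
  fin_cases i <;> rfl

theorem blockScalar_injective : Function.Injective blockScalar :=
  diagonal_injective.comp (LinearMap.funLeft_injective_of_surjective _ _ _ (by decide))

def swapSignMatrix : Matrix (Fin 4) (Fin 4) ℂ := !![0, 1, 0, 0; 1, 0, 0, 0; 0, 0, 1, 0; 0, 0, 0, -1]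

theorem commute_diagonal_and_swapSignMatrix_iff {d : Fin 4 → ℂ} (h01 : d 0 ≠ d 1)
    (h02 : d 0 ≠ d 2) (h12 : d 1 ≠ d 2) (hd23 : d 2 = d 3) (M : Matrix (Fin 4) (Fin 4) ℂ) :
    Commute M (diagonal d) ∧ Commute M swapSignMatrix ↔ M ∈ LinearMap.range blockScalar := by
  constructor
  · rintro ⟨hD, hJ⟩
    have hoff : ∀ i j, d i ≠ d j → M i j = 0 := by
      intro i j hij
      have hij' : M i j * (d j - d i) = 0 := by
        linear_combination (by simpa using congrFun₂ hD.eq i j : M i j * d j = d i * M i j)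
      exact (mul_eq_zero.mp hij').resolve_right (sub_ne_zero.mpr hij.symm)
    have hswap (i j : Fin 4) := congrFun₂ hJ.eq i j
    simp only [swapSignMatrix, mul_apply, Fin.sum_univ_four] at hswap
    have h11 : M 1 1 = M 0 0 := by simpa using (hswap 0 1).symm
    have h23 : M 2 3 = 0 := by linear_combination (by simpa using hswap 2 3 : -M 2 3 = M 2 3) / -2
    have h32 : M 3 2 = 0 := by linear_combination (by simpa using hswap 3 2 : M 3 2 = -M 3 2) / 2
    refine ⟨![M 0 0, M 2 2, M 3 3], ?_⟩
    rw [blockScalar_apply]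
    ext i j
    fin_cases i <;> fin_cases j <;>
      simp [h11, h23, h32, hoff, ← hd23, h01, h02, h12, h01.symm, h02.symm, h12.symm]
  · rintro ⟨c, rfl⟩
    refine ⟨commute_diagonal _ _, ?_⟩
    ext i j
    fin_cases i <;> fin_cases j <;>
      simp [blockScalar_apply, swapSignMatrix, mul_apply, Fin.sum_univ_four]

def stdRepGL : Representation ℂ (GL (Fin 2) ℂ) V2 :=
  (Matrix.toLinAlgEquiv' (R := ℂ) (n := Fin 2)).toAlgHom.toMonoidHom.comp (Units.coeHom _)

def sqRepGL : Representation ℂ (GL (Fin 2) ℂ) (V2 ⊗[ℂ] V2) := stdRepGL.tprod stdRepGL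

theorem sqRepGL_tmul (g : GL (Fin 2) ℂ) (v w : V2) :
    sqRepGL g (v ⊗ₜ w) = stdRepGL g v ⊗ₜ stdRepGL g w := rfl

def adaptedVec : Fin 4 → V2 ⊗[ℂ] V2 :=
  ![bv 0 ⊗ₜ bv 0, bv 1 ⊗ₜ bv 1, bv 1 ⊗ₜ bv 0 - bv 0 ⊗ₜ bv 1, bv 0 ⊗ₜ bv 1 + bv 1 ⊗ₜ bv 0]

theorem linearIndependent_adaptedVec : LinearIndependent ℂ adaptedVec := by
  rw [Fintype.linearIndependent_iff]
  intro c hc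
  let b := (Pi.basisFun ℂ (Fin 2)).tensorProduct (Pi.basisFun ℂ (Fin 2))
  obtain ⟨⟨h0, h01⟩, h10, h1⟩ : (c 0 = 0 ∧ -c 2 + c 3 = 0) ∧ c 2 + c 3 = 0 ∧ c 1 = 0 := by
    simpa [b, Fin.sum_univ_four, adaptedVec, bv, Module.Basis.tensorProduct_repr_tmul_apply]
      using fun i j => congrArg (fun z => b.repr z (i, j)) hc
  have h2 : c 2 = 0 := by linear_combination (h10 - h01) / 2
  have h3 : c 3 = 0 := by linear_combination (h01 + h10) / 2
  intro i
  fin_cases i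
  exacts [h0, h1, h2, h3]

def adaptedBasis : Module.Basis (Fin 4) ℂ (V2 ⊗[ℂ] V2) :=
  basisOfLinearIndependentOfCardEqFinrank linearIndependent_adaptedVec (by simp)

theorem coe_adaptedBasis : ⇑adaptedBasis = adaptedVec :=
  coe_basisOfLinearIndependentOfCardEqFinrank _ _

def dicX : Matrix (Fin 2) (Fin 2) ℂ := !![0, -1; 1, 0]

def dicA (θ : ℝ) : Matrix (Fin 2) (Fin 2) ℂ := !![exp (θ * I), 0; 0, exp (-(θ * I))]

section

variable {X A : GL (Fin 2) ℂ} {θ : ℝ}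

theorem stdRepGL_X_bv_zero (hX : X.val = dicX) : stdRepGL X (bv 0) = bv 1 := by
  ext i; fin_cases i <;> simp [stdRepGL, hX, dicX, bv]

theorem stdRepGL_X_bv_one (hX : X.val = dicX) : stdRepGL X (bv 1) = -bv 0 := by
  ext i; fin_cases i <;> simp [stdRepGL, hX, dicX, bv]

theorem stdRepGL_A_bv_zero (hA : A.val = dicA θ) : stdRepGL A (bv 0) = exp (θ * I) • bv 0 := by
  ext i; fin_cases i <;> simp [stdRepGL, hA, dicA, bv]

theorem stdRepGL_A_bv_one (hA : A.val = dicA θ) : stdRepGL A (bv 1) = exp (-(θ * I)) • bv 1 := by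
  ext i; fin_cases i <;> simp [stdRepGL, hA, dicA, bv]

theorem sqRepGL_X_adaptedBasis_zero (hX : X.val = dicX) :
    sqRepGL X (adaptedBasis 0) = adaptedBasis 1 := by
  simp [coe_adaptedBasis, adaptedVec, sqRepGL_tmul, stdRepGL_X_bv_zero hX]

theorem sqRepGL_X_adaptedBasis_one (hX : X.val = dicX) :
    sqRepGL X (adaptedBasis 1) = adaptedBasis 0 := by
  simp [coe_adaptedBasis, adaptedVec, sqRepGL_tmul, stdRepGL_X_bv_one hX, neg_tmul, tmul_neg]

theorem sqRepGL_X_adaptedBasis_two (hX : X.val = dicX) :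
    sqRepGL X (adaptedBasis 2) = adaptedBasis 2 := by
  simp [coe_adaptedBasis, adaptedVec, sqRepGL_tmul, stdRepGL_X_bv_zero hX, stdRepGL_X_bv_one hX,
    neg_tmul, tmul_neg, neg_add_eq_sub]

theorem sqRepGL_X_adaptedBasis_three (hX : X.val = dicX) :
    sqRepGL X (adaptedBasis 3) = -adaptedBasis 3 := by
  simp [coe_adaptedBasis, adaptedVec, sqRepGL_tmul, stdRepGL_X_bv_zero hX, stdRepGL_X_bv_one hX,
    neg_tmul, tmul_neg]

def adaptedWeight : Fin 4 → ℤ := ![2, -2, 0, 0]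

theorem sqRepGL_A_adaptedBasis (hA : A.val = dicA θ) (i : Fin 4) :
    sqRepGL A (adaptedBasis i) = exp (adaptedWeight i * θ * I) • adaptedBasis i := by
  fin_cases i <;>
    simp [coe_adaptedBasis, adaptedVec, adaptedWeight, sqRepGL_tmul, stdRepGL_A_bv_zero hA,
      stdRepGL_A_bv_one hA, smul_tmul', tmul_smul, smul_smul, ← Complex.exp_add] <;>
    ring_nf

-- The proofs below `unfold TSq` so that these equations, stated over `V2 ⊗[ℂ] V2`, can rewrite
-- submodules of the bundled module `TSq`.
theorem Wtwo_eq_span :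
    (Wtwo : Submodule ℂ (V2 ⊗[ℂ] V2)) = Submodule.span ℂ (adaptedBasis '' {0, 1}) := by
  simp only [Wtwo, coe_adaptedBasis, adaptedVec, Set.image_pair, cons_val_zero, cons_val_one]
  rfl

theorem Wtriv_eq_span :
    (Wtriv : Submodule ℂ (V2 ⊗[ℂ] V2)) = Submodule.span ℂ (adaptedBasis '' {2}) := by
  simp only [Wtriv, coe_adaptedBasis, adaptedVec, Set.image_singleton, cons_val]
  rfl

theorem Wsign_eq_span :
    (Wsign : Submodule ℂ (V2 ⊗[ℂ] V2)) = Submodule.span ℂ (adaptedBasis '' {3}) := by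
  simp only [Wsign, coe_adaptedBasis, adaptedVec, Set.image_singleton, cons_val]
  rfl

theorem Wtwo_sup_Wtriv_sup_Wsign : Wtwo ⊔ Wtriv ⊔ Wsign = (⊤ : Submodule ℂ TSq) := by
  unfold TSq
  rw [Wtwo_eq_span, Wtriv_eq_span, Wsign_eq_span, ← Submodule.span_union, ← Submodule.span_union,
    ← Set.image_union, ← Set.image_union]
  have : ({0, 1} ∪ {2} ∪ {3} : Set (Fin 4)) = Set.univ := by
    ext i; fin_cases i <;> simp
  rw [this, Set.image_univ, adaptedBasis.span_eq]

theorem disjoint_Wtwo_Wtriv_sup_Wsign : Disjoint Wtwo (Wtriv ⊔ Wsign) := by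
  unfold TSq
  rw [Wtwo_eq_span, Wtriv_eq_span, Wsign_eq_span, ← Submodule.span_union, ← Set.image_union]
  exact adaptedBasis.linearIndependent.disjoint_span_image (by simp)

theorem disjoint_Wtriv_Wsign : Disjoint Wtriv Wsign := by
  rw [Wtriv_eq_span, Wsign_eq_span]
  exact adaptedBasis.linearIndependent.disjoint_span_image (by simp)

theorem finrank_Wtwo : Module.finrank ℂ Wtwo = 2 := by
  unfold TSq
  rw [Wtwo_eq_span, adaptedBasis.finrank_span_image]
  rfl

theorem finrank_Wtriv : Module.finrank ℂ Wtriv = 1 := by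
  unfold TSq
  rw [Wtriv_eq_span, adaptedBasis.finrank_span_image]
  rfl

theorem finrank_Wsign : Module.finrank ℂ Wsign = 1 := by
  unfold TSq
  rw [Wsign_eq_span, adaptedBasis.finrank_span_image]
  rfl

theorem sqRepGL_A_mem_span_adaptedBasis (hA : A.val = dicA θ) (s : Set (Fin 4)) :
    ∀ z ∈ Submodule.span ℂ (adaptedBasis '' s),
      sqRepGL A z ∈ Submodule.span ℂ (adaptedBasis '' s) := by
  intro z hz
  refine (Submodule.map_span_le _ _ _).mpr ?_ (Submodule.mem_map_of_mem hz)
  rintro _ ⟨i, hi, rfl⟩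
  rw [sqRepGL_A_adaptedBasis hA]
  exact Submodule.smul_mem _ _ (Submodule.subset_span (Set.mem_image_of_mem _ hi))

theorem sqRep_apply_mem_Wtwo (hX : X.val = dicX) (hA : A.val = dicA θ) :
    ∀ (g : Subgroup.closure {X, A}) (z : TSq), z ∈ Wtwo → sqRep _ g z ∈ Wtwo := by
  intro g
  rw [Wtwo_eq_span]
  refine sqRepGL.apply_mem_of_mem_closure ?_ g.2
  rintro s (rfl | rfl)
  · intro z hz
    refine (Submodule.map_span_le _ _ _).mpr ?_ (Submodule.mem_map_of_mem hz)
    rintro _ ⟨i, hi | hi, rfl⟩ <;> subst hi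
    · rw [sqRepGL_X_adaptedBasis_zero hX]
      exact Submodule.subset_span ⟨1, by simp, rfl⟩
    · rw [sqRepGL_X_adaptedBasis_one hX]
      exact Submodule.subset_span ⟨0, by simp, rfl⟩
  · exact sqRepGL_A_mem_span_adaptedBasis hA _

theorem sqRep_apply_eq_self_of_mem_Wtriv (hX : X.val = dicX) (hA : A.val = dicA θ) :
    ∀ (g : Subgroup.closure {X, A}) (z : TSq), z ∈ Wtriv → sqRep _ g z = z := by
  unfold TSq
  intro g z hz
  rw [Wtriv_eq_span, Set.image_singleton, Submodule.mem_span_singleton] at hz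
  obtain ⟨c, rfl⟩ := hz
  rw [map_smul]
  congr 1
  refine sqRepGL.apply_eq_self_of_mem_closure ?_ g.2
  rintro s (rfl | rfl)
  · exact sqRepGL_X_adaptedBasis_two hX
  · simp [sqRepGL_A_adaptedBasis hA, adaptedWeight]

theorem sqRep_apply_Wsign (hX : X.val = dicX) (hA : A.val = dicA θ) :
    ∀ g : Subgroup.closure {X, A}, ((g : GL (Fin 2) ℂ) = A → ∀ z ∈ Wsign, sqRep _ g z = z) ∧
      ((g : GL (Fin 2) ℂ) = X → ∀ z ∈ Wsign, sqRep _ g z = -z) := by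
  unfold TSq
  intro g
  simp only [Wsign_eq_span, Set.image_singleton, Submodule.mem_span_singleton]
  refine ⟨?_, ?_⟩ <;> rintro hg _ ⟨c, rfl⟩ <;> change sqRepGL (g : GL (Fin 2) ℂ) _ = _ <;>
    rw [hg, map_smul]
  · simp [sqRepGL_A_adaptedBasis hA, adaptedWeight]
  · rw [sqRepGL_X_adaptedBasis_three hX, smul_neg]

theorem sqRep_apply_mem_Wsign (hX : X.val = dicX) (hA : A.val = dicA θ) :
    ∀ (g : Subgroup.closure {X, A}) (z : TSq), z ∈ Wsign → sqRep _ g z ∈ Wsign := by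
  intro g
  rw [Wsign_eq_span]
  refine sqRepGL.apply_mem_of_mem_closure ?_ g.2
  rintro s (rfl | rfl)
  · intro z hz
    rw [Set.image_singleton, Submodule.mem_span_singleton] at hz ⊢
    obtain ⟨c, rfl⟩ := hz
    exact ⟨-c, by rw [map_smul, sqRepGL_X_adaptedBasis_three hX, neg_smul, smul_neg]⟩
  · exact sqRepGL_A_mem_span_adaptedBasis hA _

theorem eq_bot_or_eq_Wtwo (hθ : Irrational (θ / Real.pi)) (hX : X.val = dicX)
    (hA : A.val = dicA θ) : ∀ q : Submodule ℂ TSq, q ≤ Wtwo →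
      (∀ (g : Subgroup.closure {X, A}) (z : TSq), z ∈ q → sqRep _ g z ∈ q) → q = ⊥ ∨ q = Wtwo := by
  unfold TSq
  intro q hq hinv
  rw [Wtwo_eq_span, Set.image_pair] at hq ⊢
  have hXq : ∀ z ∈ q, sqRepGL X z ∈ q := hinv ⟨X, Subgroup.subset_closure (by simp)⟩
  have hAq : ∀ z ∈ q, sqRepGL A z ∈ q := hinv ⟨A, Subgroup.subset_closure (by simp)⟩
  have hswap : adaptedBasis 0 ∈ q ↔ adaptedBasis 1 ∈ q :=
    ⟨fun h => sqRepGL_X_adaptedBasis_zero hX ▸ hXq _ h,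
      fun h => sqRepGL_X_adaptedBasis_one hX ▸ hXq _ h⟩
  by_cases hbot : q = ⊥
  · exact .inl hbot
  obtain ⟨y, hy, hy0⟩ := Submodule.exists_mem_ne_zero_of_ne_bot hbot
  obtain ⟨a, b, rfl⟩ := Submodule.mem_span_pair.mp (hq hy)
  have hA_smul (c : ℂ) (i : Fin 4) :
      sqRepGL A (c • adaptedBasis i) = exp (adaptedWeight i * θ * I) • c • adaptedBasis i := by
    rw [map_smul, sqRepGL_A_adaptedBasis hA, smul_comm]
  have hne : exp (adaptedWeight 0 * θ * I) ≠ exp (adaptedWeight 1 * θ * I) :=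
    (exp_int_mul_mul_I_injective hθ).ne (by decide)
  have ha : a • adaptedBasis 0 ∈ q :=
    Submodule.mem_of_add_mem_of_eigenvectors hAq (hA_smul a 0) (hA_smul b 1) hne hy
  have hb : b • adaptedBasis 1 ∈ q :=
    Submodule.mem_of_add_mem_of_eigenvectors hAq (hA_smul b 1) (hA_smul a 0) hne.symm
      (add_comm (a • adaptedBasis 0) _ ▸ hy)
  have h0 : adaptedBasis 0 ∈ q := by
    by_cases ha0 : a = 0
    · have hb0 : b ≠ 0 := by rintro rfl; simp [ha0] at hy0
      exact hswap.mpr ((q.smul_mem_iff hb0).mp hb)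
    · exact (q.smul_mem_iff ha0).mp ha
  refine .inr (le_antisymm hq ?_)
  rw [Submodule.span_le, Set.insert_subset_iff, Set.singleton_subset_iff]
  exact ⟨h0, hswap.mp h0⟩

theorem not_exists_equivariant_Wtriv_Wsign (hX : X.val = dicX) (hA : A.val = dicA θ) :
    ¬ ∃ f : Wtriv ≃ₗ[ℂ] Wsign, ∀ (g : Subgroup.closure {X, A}) (w w' : Wtriv),
      sqRep _ g (w : TSq) = (w' : TSq) → sqRep _ g (f w : TSq) = (f w' : TSq) := by
  rintro ⟨f, hf⟩
  have : Nontrivial Wtriv := Module.nontrivial_of_finrank_eq_succ finrank_Wtriv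
  obtain ⟨w, hw⟩ := exists_ne (0 : Wtriv)
  let x : Subgroup.closure {X, A} := ⟨X, Subgroup.subset_closure (by simp)⟩
  have hfix : sqRep _ x (f w : TSq) = f w :=
    hf x w w (sqRep_apply_eq_self_of_mem_Wtriv hX hA x w w.2)
  have hneg : sqRep _ x (f w : TSq) = -(f w : TSq) := (sqRep_apply_Wsign hX hA x).2 rfl _ (f w).2
  have := IsAddTorsionFree.of_isTorsionFree ℂ (V2 ⊗[ℂ] V2)
  have hfw : f w = 0 := Subtype.ext ((self_eq_neg (G := V2 ⊗[ℂ] V2)).mp (hfix.symm.trans hneg))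
  exact hw (f.map_eq_zero_iff.mp hfw)

theorem toMatrixAlgEquiv_sqRepGL_X (hX : X.val = dicX) :
    LinearMap.toMatrixAlgEquiv adaptedBasis (sqRepGL X) = swapSignMatrix := by
  ext i j
  rw [LinearMap.toMatrixAlgEquiv_apply]
  fin_cases i <;> fin_cases j <;>
    simp [sqRepGL_X_adaptedBasis_zero hX, sqRepGL_X_adaptedBasis_one hX,
      sqRepGL_X_adaptedBasis_two hX, sqRepGL_X_adaptedBasis_three hX, swapSignMatrix]

theorem toMatrixAlgEquiv_sqRepGL_A (hA : A.val = dicA θ) :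
    LinearMap.toMatrixAlgEquiv adaptedBasis (sqRepGL A) =
      diagonal fun i => exp (adaptedWeight i * θ * I) := by
  ext i j
  rw [LinearMap.toMatrixAlgEquiv_apply, sqRepGL_A_adaptedBasis hA, map_smul, adaptedBasis.repr_self,
    diagonal_apply, Finsupp.smul_apply, Finsupp.single_apply]
  split_ifs <;> simp_all [eq_comm]

theorem finrank_equivEnd (hθ : Irrational (θ / Real.pi)) (hX : X.val = dicX)
    (hA : A.val = dicA θ) : Module.finrank ℂ (equivEnd (sqRep (Subgroup.closure {X, A}))) = 3 := by
  let Φ := LinearMap.toMatrixAlgEquiv adaptedBasis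
  have hcomm (f T : Module.End ℂ (V2 ⊗[ℂ] V2)) : f ∘ₗ T = T ∘ₗ f ↔ Commute (Φ f) (Φ T) :=
    (commute_map_iff Φ.injective).symm
  have hexp {m n : ℤ} (h : m ≠ n) : exp (m * θ * I) ≠ exp (n * θ * I) :=
    (exp_int_mul_mul_I_injective hθ).ne h
  have hmap : (equivEnd (sqRepGL.comp (Subgroup.closure {X, A}).subtype)).map
      (Φ.toLinearEquiv : Module.End ℂ (V2 ⊗[ℂ] V2) →ₗ[ℂ] Matrix (Fin 4) (Fin 4) ℂ) =
      LinearMap.range blockScalar := by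
    ext M
    rw [Submodule.mem_map_equiv, mem_equivEnd_comp_closure_iff]
    simp only [Set.forall_mem_insert, Set.mem_singleton_iff, forall_eq, hcomm]
    rw [← commute_diagonal_and_swapSignMatrix_iff (d := fun i => exp (adaptedWeight i * θ * I))
        (hexp (by decide)) (hexp (by decide)) (hexp (by decide)) rfl, and_comm]
    simp [Φ, toMatrixAlgEquiv_sqRepGL_X hX, toMatrixAlgEquiv_sqRepGL_A hA]
  change Module.finrank ℂ (equivEnd (sqRepGL.comp (Subgroup.closure {X, A}).subtype)) = 3
  rw [← Φ.toLinearEquiv.finrank_map_eq, hmap, LinearMap.finrank_range_of_inj blockScalar_injective,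
    Module.finrank_fin_fun]

end

/-- The `Dic∞`-representation `V ⊗ V` decomposes as the direct sum of three pairwise
non-isomorphic simple subrepresentations: the two-dimensional simple `V₂` spanned by
`v₁⊗v₁, v₂⊗v₂`, the trivial representation spanned by `v₂⊗v₁ − v₁⊗v₂`, and the
one-dimensional representation `𝟙̄` spanned by `v₁⊗v₂ + v₂⊗v₁` (on which `a` acts by `1`
and `x` by `−1`); consequently `dim_ℂ End_{Dic∞}(V⊗V) = 3`. -/
theorem tensorSquare_decomposition_dicyclicInf
    (θ : ℝ) (hθ : Irrational (θ / Real.pi)) (X A : GL (Fin 2) ℂ)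
    (hX : (X : Matrix (Fin 2) (Fin 2) ℂ) = !![0, -1; 1, 0])
    (hA : (A : Matrix (Fin 2) (Fin 2) ℂ) =
      !![Complex.exp (θ * Complex.I), 0; 0, Complex.exp (-(θ * Complex.I))])
    (G : Subgroup (GL (Fin 2) ℂ)) (hG : G = Subgroup.closure {X, A}) :
    -- the three subspaces are subrepresentations:
    (∀ (g : G) (z : TSq), z ∈ Wtwo → sqRep G g z ∈ Wtwo) ∧
    (∀ (g : G) (z : TSq), z ∈ Wtriv → sqRep G g z ∈ Wtriv) ∧
    (∀ (g : G) (z : TSq), z ∈ Wsign → sqRep G g z ∈ Wsign) ∧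
    -- they form a direct sum decomposition of `V ⊗ V`:
    (Wtwo ⊔ Wtriv ⊔ Wsign = (⊤ : Submodule ℂ TSq)) ∧
    Disjoint Wtwo (Wtriv ⊔ Wsign) ∧ Disjoint Wtriv Wsign ∧
    -- of dimensions 2, 1, 1:
    Module.finrank ℂ Wtwo = 2 ∧ Module.finrank ℂ Wtriv = 1 ∧ Module.finrank ℂ Wsign = 1 ∧
    -- each summand is simple:
    (∀ q : Submodule ℂ TSq, q ≤ Wtwo →
      (∀ (g : G) (z : TSq), z ∈ q → sqRep G g z ∈ q) → q = ⊥ ∨ q = Wtwo) ∧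
    (∀ q : Submodule ℂ TSq, q ≤ Wtriv →
      (∀ (g : G) (z : TSq), z ∈ q → sqRep G g z ∈ q) → q = ⊥ ∨ q = Wtriv) ∧
    (∀ q : Submodule ℂ TSq, q ≤ Wsign →
      (∀ (g : G) (z : TSq), z ∈ q → sqRep G g z ∈ q) → q = ⊥ ∨ q = Wsign) ∧
    -- the action on `Wtriv` is trivial:
    (∀ (g : G) (z : TSq), z ∈ Wtriv → sqRep G g z = z) ∧
    -- on `Wsign = 𝟙̄`, the generator `a` acts by `1` and the generator `x` by `−1`:
    (∀ g : G, ((g : GL (Fin 2) ℂ) = A → ∀ z ∈ Wsign, sqRep G g z = z) ∧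
      ((g : GL (Fin 2) ℂ) = X → ∀ z ∈ Wsign, sqRep G g z = -z)) ∧
    -- the three summands are pairwise non-isomorphic as `Dic∞`-representations:
    (¬ ∃ f : Wtwo ≃ₗ[ℂ] Wtriv, ∀ (g : G) (w w' : Wtwo),
      sqRep G g (w : TSq) = (w' : TSq) → sqRep G g (f w : TSq) = (f w' : TSq)) ∧
    (¬ ∃ f : Wtwo ≃ₗ[ℂ] Wsign, ∀ (g : G) (w w' : Wtwo),
      sqRep G g (w : TSq) = (w' : TSq) → sqRep G g (f w : TSq) = (f w' : TSq)) ∧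
    (¬ ∃ f : Wtriv ≃ₗ[ℂ] Wsign, ∀ (g : G) (w w' : Wtriv),
      sqRep G g (w : TSq) = (w' : TSq) → sqRep G g (f w : TSq) = (f w' : TSq)) ∧
    -- consequently the endomorphism algebra is three-dimensional:
    Module.finrank ℂ (equivEnd (sqRep G)) = 3 := by
  subst hG
  have hWtriv := sqRep_apply_eq_self_of_mem_Wtriv hX hA
  exact ⟨sqRep_apply_mem_Wtwo hX hA, fun g z hz => (hWtriv g z hz).symm ▸ hz,
    sqRep_apply_mem_Wsign hX hA, Wtwo_sup_Wtriv_sup_Wsign, disjoint_Wtwo_Wtriv_sup_Wsign,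
    disjoint_Wtriv_Wsign, finrank_Wtwo, finrank_Wtriv, finrank_Wsign, eq_bot_or_eq_Wtwo hθ hX hA,
    fun _ hq _ => Submodule.eq_bot_or_eq_of_le_of_finrank_eq_one finrank_Wtriv hq,
    fun _ hq _ => Submodule.eq_bot_or_eq_of_le_of_finrank_eq_one finrank_Wsign hq,
    hWtriv, sqRep_apply_Wsign hX hA,
    fun ⟨f, _⟩ => absurd f.finrank_eq (by rw [finrank_Wtwo, finrank_Wtriv]; decide),
    fun ⟨f, _⟩ => absurd f.finrank_eq (by rw [finrank_Wtwo, finrank_Wsign]; decide),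
    not_exists_equivariant_Wtriv_Wsign hX hA, finrank_equivEnd hθ hX hA⟩
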